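/- Let ζ and ζ' be the optimal values of the continuous relaxations (in which every binary constraint u_i ∈ {0,1} is replaced by 0 ≤ u_i ≤ 1 and every binary constraint z_{ij}^l ∈ {0,1} is replaced by 0 ≤ z_{ij}^l ≤ 1) of formulation (LocP-F1) and of formulation (LocP-F2), respectively. Then ζ ≤ ζ'. -/

import Mathlib

open scoped BigOperators ENNReal

attribute [local instance] Classical.propDecidable

/-- The ℓ_p norm on ℝ^d for an extended-real exponent `p` (with `‖x‖_∞ = max_k |x_k|`). -/
noncomputable def lpnorm {d : ℕ} (p : ℝ≥0∞) (x : Fin d → ℝ) : ℝ :=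
  if p = ∞ then ⨆ k, |x k| else (∑ k, |x k| ^ p.toReal) ^ (1 / p.toReal)

/-- Out-neighbours of `i` in the adjacency relation `Adj`. -/
noncomputable def outN {m : ℕ} (Adj : Fin m → Fin m → Prop) (i : Fin m) : Finset (Fin m) :=
  Finset.univ.filter (fun j => Adj i j)

/-- In-neighbours of `i` in the adjacency relation `Adj`. -/
noncomputable def inN {m : ℕ} (Adj : Fin m → Fin m → Prop) (i : Fin m) : Finset (Fin m) :=
  Finset.univ.filter (fun h => Adj h i)

/-! Forgetting ρ, Φ, Ψ, Υ, Θ maps every feasible point of the relaxation of (LocP-F2) to a feasible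
point of the relaxation of (LocP-F1) with the same `dv`: the F2 distance terms are the norms of
pieces that add up to the F1 distance vector, so by the triangle inequality the F2 distance
constraints are the stronger ones. Since `sInf ∅ = 0` in `ℝ`, the inequality of infima also needs
(LocP-F2) to be feasible whenever (LocP-F1) is; a feasible flow extends to (LocP-F2) by splitting
the flow through each transit node in proportion to the inflow. -/

section Lp

variable {d : ℕ} {p : ℝ≥0∞}

lemma lpnorm_eq_norm (hp : 1 ≤ p) (x : Fin d → ℝ) :
    lpnorm p x = ‖(WithLp.toLp p x : PiLp p fun _ : Fin d => ℝ)‖ := by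
  rcases eq_or_ne p ∞ with rfl | hinf
  · simp [lpnorm, PiLp.norm_eq_ciSup, Real.norm_eq_abs]
  · have h0 : 0 < p.toReal := ENNReal.toReal_pos (zero_lt_one.trans_le hp).ne' hinf
    simp [lpnorm, hinf, PiLp.norm_eq_sum h0, Real.norm_eq_abs]

lemma lpnorm_nonneg (hp : 1 ≤ p) (x : Fin d → ℝ) : 0 ≤ lpnorm p x := by
  have : Fact (1 ≤ p) := ⟨hp⟩
  exact lpnorm_eq_norm hp x ▸ norm_nonneg _

lemma lpnorm_add_le (hp : 1 ≤ p) (x y : Fin d → ℝ) :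
    lpnorm p (x + y) ≤ lpnorm p x + lpnorm p y := by
  have : Fact (1 ≤ p) := ⟨hp⟩
  simpa only [lpnorm_eq_norm hp, WithLp.toLp_add] using norm_add_le _ _

lemma lpnorm_sum_le (hp : 1 ≤ p) {ι : Type*} (s : Finset ι) (f : ι → Fin d → ℝ) :
    lpnorm p (∑ i ∈ s, f i) ≤ ∑ i ∈ s, lpnorm p (f i) := by
  have : Fact (1 ≤ p) := ⟨hp⟩
  simpa only [lpnorm_eq_norm hp, WithLp.toLp_sum] using norm_sum_le s fun i => WithLp.toLp p (f i)

lemma lpnorm_add_sum_sub_le (hp : 1 ≤ p) {ι : Type*} (s : Finset ι) (a : ι → Fin d → ℝ)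
    (c : ι → ℝ) (b x : Fin d → ℝ) (t : ℝ) (hct : ∑ j ∈ s, c j + t = 1) :
    lpnorm p (b + ∑ j ∈ s, a j - x) ≤ ∑ j ∈ s, lpnorm p (a j - c j • x) + lpnorm p (b - t • x) := by
  have hx : x = ∑ j ∈ s, c j • x + t • x := by rw [← Finset.sum_smul, ← add_smul, hct, one_smul]
  have hsplit : b + ∑ j ∈ s, a j - x = ∑ j ∈ s, (a j - c j • x) + (b - t • x) := by
    conv_lhs => rw [hx]
    rw [Finset.sum_sub_distrib]
    abel
  rw [hsplit]
  exact (lpnorm_add_le hp _ _).trans (add_le_add (lpnorm_sum_le hp _ _) le_rfl)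

lemma lpnorm_add_sum_sub_sum_le (hp : 1 ≤ p) {ι κ : Type*} (s : Finset ι) (t : Finset κ)
    (A C : ι → κ → Fin d → ℝ) (B D : ι → Fin d → ℝ) :
    lpnorm p (∑ h ∈ s, B h + ∑ h ∈ s, ∑ j ∈ t, A h j - (∑ h ∈ s, ∑ j ∈ t, C h j + ∑ h ∈ s, D h))
      ≤ ∑ h ∈ s, ∑ j ∈ t, lpnorm p (A h j - C h j) + ∑ h ∈ s, lpnorm p (B h - D h) := by
  have hsplit : ∑ h ∈ s, B h + ∑ h ∈ s, ∑ j ∈ t, A h j - (∑ h ∈ s, ∑ j ∈ t, C h j + ∑ h ∈ s, D h)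
      = ∑ h ∈ s, ∑ j ∈ t, (A h j - C h j) + ∑ h ∈ s, (B h - D h) := by
    simp only [Finset.sum_sub_distrib]
    abel
  rw [hsplit]
  refine (lpnorm_add_le hp _ _).trans (add_le_add ?_ (lpnorm_sum_le hp _ _))
  exact (lpnorm_sum_le hp _ _).trans (Finset.sum_le_sum fun h _ => lpnorm_sum_le hp _ _)

end Lp

section SumSmul

variable {R M ι κ : Type*} [Semiring R] [AddCommMonoid M] [Module R M]

lemma sum_smul_eq_sum_sum_smul (s : Finset ι) (t : Finset κ) (f : κ → ι → R) (g : ι → R)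
    (v : ι → M) (hfg : ∀ e ∈ s, ∑ k ∈ t, f k e = g e) :
    ∑ e ∈ s, g e • v e = ∑ k ∈ t, ∑ e ∈ s, f k e • v e := by
  rw [Finset.sum_comm]
  exact Finset.sum_congr rfl fun e he => by rw [← hfg e he, Finset.sum_smul]

lemma sum_smul_eq_sum_sum_smul_add (s : Finset ι) (t : Finset κ) (f : κ → ι → R)
    (f₀ g : ι → R) (v : ι → M) (hfg : ∀ e ∈ s, ∑ k ∈ t, f k e + f₀ e = g e) :
    ∑ e ∈ s, g e • v e = ∑ k ∈ t, ∑ e ∈ s, f k e • v e + ∑ e ∈ s, f₀ e • v e := by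
  rw [← sum_smul_eq_sum_sum_smul s t f _ v fun _ _ => rfl, ← Finset.sum_add_distrib]
  exact Finset.sum_congr rfl fun e he => by rw [← hfg e he, add_smul]

end SumSmul

lemma mul_div_cancel_of_le {K : Type*} [Field K] [PartialOrder K] {a b : K} (ha : 0 ≤ a)
    (hab : a ≤ b) : a * b / b = a :=
  mul_div_cancel_of_imp fun hb => le_antisymm (hb ▸ hab) ha

lemma sInf_le_sInf_of_subset_of_nonneg {A B : Set ℝ} (hBA : B ⊆ A) (hA : ∀ r ∈ A, 0 ≤ r)
    (hAB : A.Nonempty → B.Nonempty) : sInf A ≤ sInf B := by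
  rcases B.eq_empty_or_nonempty with rfl | hB
  · rw [Set.not_nonempty_iff_eq_empty.mp fun hA' => (hAB hA').ne_empty rfl]
  · exact csInf_le_csInf ⟨0, hA⟩ hB hBA

section LocP

variable {d m n : ℕ} (Ext : Fin m → Finset (Fin d → ℝ)) (ExtF : Fin m → Fin m → Finset (Fin d → ℝ))
  (Adj : Fin m → Fin m → Prop) (p : Fin m → ℝ≥0∞) (x : Fin n → Fin d → ℝ) (sl : Fin n → Fin m)

-- The constraints shared by the continuous relaxations of (LocP-F1) and (LocP-F2).
structure LocPFlowFeasible (u : Fin m → ℝ) (μ : Fin m → (Fin d → ℝ) → ℝ)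
    (z : Fin n → Fin m → Fin m → ℝ) (lam : Fin n → Fin m → Fin m → (Fin d → ℝ) → ℝ) : Prop where
  u_mem_Icc : ∀ i, 0 ≤ u i ∧ u i ≤ 1
  μ_nonneg : ∀ i, ∀ e ∈ Ext i, 0 ≤ μ i e
  z_mem_Icc : ∀ l i j, Adj i j → 0 ≤ z l i j ∧ z l i j ≤ 1
  lam_nonneg : ∀ l i j, Adj i j → ∀ e ∈ ExtF i j, 0 ≤ lam l i j e
  sum_u : ∑ i, u i = 1
  sum_μ : ∀ i, ∑ e ∈ Ext i, μ i e = u i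
  flow_source : ∀ l, (∑ j ∈ outN Adj (sl l), z l (sl l) j)
    - (∑ h ∈ inN Adj (sl l), z l h (sl l)) = 1 - u (sl l)
  flow_transit : ∀ l i, i ≠ sl l →
    (∑ j ∈ outN Adj i, z l i j) - (∑ h ∈ inN Adj i, z l h i) = -(u i)
  inflow_le : ∀ l i, ∑ h ∈ inN Adj i, z l h i ≤ 1 - u (sl l)
  outflow_le : ∀ l i, ∑ j ∈ outN Adj i, z l i j ≤ 1 - u (sl l)
  sum_lam : ∀ l i j, Adj i j → ∑ e ∈ ExtF i j, lam l i j e = z l i j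

structure LocPF1Feasible (u : Fin m → ℝ) (μ : Fin m → (Fin d → ℝ) → ℝ) (dv : Fin n → Fin m → ℝ)
    (z : Fin n → Fin m → Fin m → ℝ) (lam : Fin n → Fin m → Fin m → (Fin d → ℝ) → ℝ) : Prop
    extends LocPFlowFeasible Ext ExtF Adj sl u μ z lam where
  dv_nonneg : ∀ l i, 0 ≤ dv l i
  dist_source : ∀ l, lpnorm (p (sl l))
    ((∑ e ∈ Ext (sl l), μ (sl l) e • e)
      + (∑ j ∈ outN Adj (sl l), ∑ e ∈ ExtF (sl l) j, lam l (sl l) j e • e) - x l) ≤ dv l (sl l)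
  dist_transit : ∀ l i, i ≠ sl l → lpnorm (p i)
    ((∑ e ∈ Ext i, μ i e • e) + (∑ j ∈ outN Adj i, ∑ e ∈ ExtF i j, lam l i j e • e)
      - (∑ h ∈ inN Adj i, ∑ e ∈ ExtF h i, lam l h i e • e)) ≤ dv l i

structure LocPF2Split (u : Fin m → ℝ) (μ : Fin m → (Fin d → ℝ) → ℝ)
    (z : Fin n → Fin m → Fin m → ℝ) (lam : Fin n → Fin m → Fin m → (Fin d → ℝ) → ℝ)
    (ρ : Fin n → Fin m → Fin m → Fin m → ℝ)
    (Φ Ψ : Fin n → Fin m → Fin m → Fin m → (Fin d → ℝ) → ℝ)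
    (Υ Θ : Fin n → Fin m → Fin m → (Fin d → ℝ) → ℝ) : Prop where
  ρ_nonneg : ∀ l i, i ≠ sl l → ∀ h j, Adj h i → Adj i j → 0 ≤ ρ l h i j
  Φ_nonneg : ∀ l i, i ≠ sl l → ∀ h j, Adj h i → Adj i j → ∀ e ∈ ExtF h i, 0 ≤ Φ l h i j e
  Ψ_nonneg : ∀ l i, i ≠ sl l → ∀ h j, Adj h i → Adj i j → ∀ e ∈ ExtF i j, 0 ≤ Ψ l h i j e
  Υ_nonneg : ∀ l i, i ≠ sl l → ∀ h, Adj h i → ∀ e ∈ ExtF h i, 0 ≤ Υ l h i e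
  Θ_nonneg : ∀ l i, i ≠ sl l → ∀ h, Adj h i → ∀ e ∈ Ext i, 0 ≤ Θ l h i e
  sum_ρ_add_sum_Θ : ∀ l i, i ≠ sl l → ∀ h, Adj h i →
    (∑ j ∈ outN Adj i, ρ l h i j) + (∑ e ∈ Ext i, Θ l h i e) = z l h i
  sum_ρ : ∀ l i, i ≠ sl l → ∀ j, Adj i j → ∑ h ∈ inN Adj i, ρ l h i j = z l i j
  sum_Φ : ∀ l i, i ≠ sl l → ∀ h j, Adj h i → Adj i j → ∑ e ∈ ExtF h i, Φ l h i j e = ρ l h i j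
  sum_Φ_add_Υ : ∀ l i, i ≠ sl l → ∀ h, Adj h i → ∀ e ∈ ExtF h i,
    (∑ j ∈ outN Adj i, Φ l h i j e) + Υ l h i e = lam l h i e
  sum_Ψ : ∀ l i, i ≠ sl l → ∀ h j, Adj h i → Adj i j → ∑ e ∈ ExtF i j, Ψ l h i j e = ρ l h i j
  sum_Ψ_eq_lam : ∀ l i, i ≠ sl l → ∀ j, Adj i j → ∀ e ∈ ExtF i j,
    ∑ h ∈ inN Adj i, Ψ l h i j e = lam l i j e
  sum_sum_Υ : ∀ l i, i ≠ sl l → ∑ h ∈ inN Adj i, ∑ e ∈ ExtF h i, Υ l h i e = u i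
  sum_sum_Θ : ∀ l i, i ≠ sl l → ∑ h ∈ inN Adj i, ∑ e ∈ Ext i, Θ l h i e = u i
  sum_Θ : ∀ l i, i ≠ sl l → ∀ e ∈ Ext i, ∑ h ∈ inN Adj i, Θ l h i e = μ i e

structure LocPF2Feasible (u : Fin m → ℝ) (μ : Fin m → (Fin d → ℝ) → ℝ) (dv : Fin n → Fin m → ℝ)
    (z : Fin n → Fin m → Fin m → ℝ) (lam : Fin n → Fin m → Fin m → (Fin d → ℝ) → ℝ)
    (ρ : Fin n → Fin m → Fin m → Fin m → ℝ)
    (Φ Ψ : Fin n → Fin m → Fin m → Fin m → (Fin d → ℝ) → ℝ)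
    (Υ Θ : Fin n → Fin m → Fin m → (Fin d → ℝ) → ℝ) : Prop
    extends LocPFlowFeasible Ext ExtF Adj sl u μ z lam,
      LocPF2Split Ext ExtF Adj sl u μ z lam ρ Φ Ψ Υ Θ where
  dv_nonneg : ∀ l i, 0 ≤ dv l i
  dist_source : ∀ l, (∑ j ∈ outN Adj (sl l),
      lpnorm (p (sl l)) ((∑ e ∈ ExtF (sl l) j, lam l (sl l) j e • e) - z l (sl l) j • x l))
    + lpnorm (p (sl l)) ((∑ e ∈ Ext (sl l), μ (sl l) e • e) - u (sl l) • x l) ≤ dv l (sl l)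
  dist_transit : ∀ l i, i ≠ sl l →
    (∑ h ∈ inN Adj i, ∑ j ∈ outN Adj i,
      lpnorm (p i) ((∑ e ∈ ExtF i j, Ψ l h i j e • e) - (∑ e ∈ ExtF h i, Φ l h i j e • e)))
    + (∑ h ∈ inN Adj i,
      lpnorm (p i) ((∑ e ∈ Ext i, Θ l h i e • e) - (∑ e ∈ ExtF h i, Υ l h i e • e))) ≤ dv l i

variable {Ext ExtF Adj p x sl} {u : Fin m → ℝ} {μ : Fin m → (Fin d → ℝ) → ℝ}
  {dv : Fin n → Fin m → ℝ} {z : Fin n → Fin m → Fin m → ℝ}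
  {lam : Fin n → Fin m → Fin m → (Fin d → ℝ) → ℝ} {ρ : Fin n → Fin m → Fin m → Fin m → ℝ}
  {Φ Ψ : Fin n → Fin m → Fin m → Fin m → (Fin d → ℝ) → ℝ}
  {Υ Θ : Fin n → Fin m → Fin m → (Fin d → ℝ) → ℝ}

namespace LocPFlowFeasible

variable (hF : LocPFlowFeasible Ext ExtF Adj sl u μ z lam)
include hF

lemma inflow_nonneg (l : Fin n) (i : Fin m) : 0 ≤ ∑ h ∈ inN Adj i, z l h i :=
  Finset.sum_nonneg fun h hh => (hF.z_mem_Icc l h i (Finset.mem_filter.mp hh).2).1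

lemma outflow_nonneg (l : Fin n) (i : Fin m) : 0 ≤ ∑ j ∈ outN Adj i, z l i j :=
  Finset.sum_nonneg fun j hj => (hF.z_mem_Icc l i j (Finset.mem_filter.mp hj).2).1

lemma outflow_source_add (l : Fin n) : ∑ j ∈ outN Adj (sl l), z l (sl l) j + u (sl l) = 1 := by
  linarith [hF.flow_source l, hF.outflow_le l (sl l), hF.inflow_nonneg l (sl l)]

lemma inflow_eq {l : Fin n} {i : Fin m} (hi : i ≠ sl l) :
    ∑ h ∈ inN Adj i, z l h i = ∑ j ∈ outN Adj i, z l i j + u i := by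
  linarith [hF.flow_transit l i hi]

lemma le_inflow_of_adj_in {l : Fin n} {h i : Fin m} (hhi : Adj h i) :
    z l h i ≤ ∑ k ∈ inN Adj i, z l k i :=
  Finset.single_le_sum (f := fun k => z l k i)
    (fun k hk => (hF.z_mem_Icc l k i (Finset.mem_filter.mp hk).2).1)
    (Finset.mem_filter.mpr ⟨Finset.mem_univ _, hhi⟩)

lemma u_le_inflow {l : Fin n} {i : Fin m} (hi : i ≠ sl l) : u i ≤ ∑ k ∈ inN Adj i, z l k i := by
  linarith [hF.inflow_eq hi, hF.outflow_nonneg l i]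

lemma le_inflow_of_adj_out {l : Fin n} {i j : Fin m} (hi : i ≠ sl l) (hij : Adj i j) :
    z l i j ≤ ∑ k ∈ inN Adj i, z l k i := by
  have hle : z l i j ≤ ∑ k ∈ outN Adj i, z l i k :=
    Finset.single_le_sum (f := fun k => z l i k)
      (fun k hk => (hF.z_mem_Icc l i k (Finset.mem_filter.mp hk).2).1)
      (Finset.mem_filter.mpr ⟨Finset.mem_univ _, hij⟩)
  linarith [hF.inflow_eq hi, (hF.u_mem_Icc i).1]

lemma lam_le {l : Fin n} {i j : Fin m} (hij : Adj i j) {e : Fin d → ℝ} (he : e ∈ ExtF i j) :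
    lam l i j e ≤ z l i j :=
  hF.sum_lam l i j hij ▸ Finset.single_le_sum (hF.lam_nonneg l i j hij) he

lemma μ_le {i : Fin m} {e : Fin d → ℝ} (he : e ∈ Ext i) : μ i e ≤ u i :=
  hF.sum_μ i ▸ Finset.single_le_sum (hF.μ_nonneg i) he

-- The flow entering transit node `i` along `(h, i)` is shared among the outgoing arcs and the
-- allocation `u i` in proportion to their parts of the inflow; if the inflow is `0`, so is everything
-- at `i`, and the junk value `_ / 0 = 0` does no harm.
theorem locPF2Split_proportional :
    LocPF2Split Ext ExtF Adj sl u μ z lam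
      (fun l h i j => z l h i * z l i j / ∑ k ∈ inN Adj i, z l k i)
      (fun l h i j e => lam l h i e * z l i j / ∑ k ∈ inN Adj i, z l k i)
      (fun l h i j e => z l h i * lam l i j e / ∑ k ∈ inN Adj i, z l k i)
      (fun l h i e => lam l h i e * u i / ∑ k ∈ inN Adj i, z l k i)
      (fun l h i e => z l h i * μ i e / ∑ k ∈ inN Adj i, z l k i) where
  ρ_nonneg l i _ h j hhi hij :=
    div_nonneg (mul_nonneg (hF.z_mem_Icc l h i hhi).1 (hF.z_mem_Icc l i j hij).1)
      (hF.inflow_nonneg l i)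
  Φ_nonneg l i _ h j hhi hij e he :=
    div_nonneg (mul_nonneg (hF.lam_nonneg l h i hhi e he) (hF.z_mem_Icc l i j hij).1)
      (hF.inflow_nonneg l i)
  Ψ_nonneg l i _ h j hhi hij e he :=
    div_nonneg (mul_nonneg (hF.z_mem_Icc l h i hhi).1 (hF.lam_nonneg l i j hij e he))
      (hF.inflow_nonneg l i)
  Υ_nonneg l i _ h hhi e he :=
    div_nonneg (mul_nonneg (hF.lam_nonneg l h i hhi e he) (hF.u_mem_Icc i).1)
      (hF.inflow_nonneg l i)
  Θ_nonneg l i _ h hhi e he :=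
    div_nonneg (mul_nonneg (hF.z_mem_Icc l h i hhi).1 (hF.μ_nonneg i e he))
      (hF.inflow_nonneg l i)
  sum_ρ_add_sum_Θ l i hi h hhi := by
    simp only [← Finset.sum_div, ← Finset.mul_sum, ← add_div, ← mul_add, hF.sum_μ,
      ← hF.inflow_eq hi]
    exact mul_div_cancel_of_le (hF.z_mem_Icc l h i hhi).1 (hF.le_inflow_of_adj_in hhi)
  sum_ρ l i hi j hij := by
    rw [← Finset.sum_div, ← Finset.sum_mul, mul_comm]
    exact mul_div_cancel_of_le (hF.z_mem_Icc l i j hij).1 (hF.le_inflow_of_adj_out hi hij)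
  sum_Φ l i _ h j hhi _ := by
    simp only [← Finset.sum_div, ← Finset.sum_mul, hF.sum_lam l h i hhi]
  sum_Φ_add_Υ l i hi h hhi e he := by
    simp only [← Finset.sum_div, ← Finset.mul_sum, ← add_div, ← mul_add, ← hF.inflow_eq hi]
    exact mul_div_cancel_of_le (hF.lam_nonneg l h i hhi e he)
      ((hF.lam_le hhi he).trans (hF.le_inflow_of_adj_in hhi))
  sum_Ψ l i _ h j _ hij := by
    simp only [← Finset.sum_div, ← Finset.mul_sum, hF.sum_lam l i j hij]
  sum_Ψ_eq_lam l i hi j hij e he := by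
    rw [← Finset.sum_div, ← Finset.sum_mul, mul_comm]
    exact mul_div_cancel_of_le (hF.lam_nonneg l i j hij e he)
      ((hF.lam_le hij he).trans (hF.le_inflow_of_adj_out hi hij))
  sum_sum_Υ l i hi := by
    rw [Finset.sum_congr rfl fun h hh => by
      rw [← Finset.sum_div, ← Finset.sum_mul, hF.sum_lam l h i (Finset.mem_filter.mp hh).2]]
    rw [← Finset.sum_div, ← Finset.sum_mul, mul_comm]
    exact mul_div_cancel_of_le (hF.u_mem_Icc i).1 (hF.u_le_inflow hi)
  sum_sum_Θ l i hi := by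
    simp only [← Finset.sum_div, ← Finset.mul_sum, hF.sum_μ, ← Finset.sum_mul]
    rw [mul_comm]
    exact mul_div_cancel_of_le (hF.u_mem_Icc i).1 (hF.u_le_inflow hi)
  sum_Θ l i hi e he := by
    rw [← Finset.sum_div, ← Finset.sum_mul, mul_comm]
    exact mul_div_cancel_of_le (hF.μ_nonneg i e he) ((hF.μ_le he).trans (hF.u_le_inflow hi))

end LocPFlowFeasible

theorem LocPF2Feasible.toLocPF1Feasible (hp : ∀ i, 1 ≤ p i)
    (hF : LocPF2Feasible Ext ExtF Adj p x sl u μ dv z lam ρ Φ Ψ Υ Θ) :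
    LocPF1Feasible Ext ExtF Adj p x sl u μ dv z lam where
  toLocPFlowFeasible := hF.toLocPFlowFeasible
  dv_nonneg := hF.dv_nonneg
  dist_source l :=
    (lpnorm_add_sum_sub_le (hp _) _ _ _ _ _ _ (hF.outflow_source_add l)).trans (hF.dist_source l)
  dist_transit l i hi := by
    have hout : ∑ j ∈ outN Adj i, ∑ e ∈ ExtF i j, lam l i j e • e
        = ∑ h ∈ inN Adj i, ∑ j ∈ outN Adj i, ∑ e ∈ ExtF i j, Ψ l h i j e • e := by
      rw [Finset.sum_comm]
      exact Finset.sum_congr rfl fun j hj => sum_smul_eq_sum_sum_smul _ _ _ _ _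
        (hF.sum_Ψ_eq_lam l i hi j (Finset.mem_filter.mp hj).2)
    have hin : ∑ h ∈ inN Adj i, ∑ e ∈ ExtF h i, lam l h i e • e
        = ∑ h ∈ inN Adj i, ∑ j ∈ outN Adj i, ∑ e ∈ ExtF h i, Φ l h i j e • e
          + ∑ h ∈ inN Adj i, ∑ e ∈ ExtF h i, Υ l h i e • e := by
      rw [← Finset.sum_add_distrib]
      exact Finset.sum_congr rfl fun h hh => sum_smul_eq_sum_sum_smul_add _ _ _ _ _ _
        (hF.sum_Φ_add_Υ l i hi h (Finset.mem_filter.mp hh).2)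
    rw [sum_smul_eq_sum_sum_smul _ _ _ _ _ (hF.sum_Θ l i hi), hout, hin]
    exact (lpnorm_add_sum_sub_sum_le (hp i) _ _ _ _ _ _).trans (hF.dist_transit l i hi)

theorem LocPF2Split.exists_locPF2Feasible (hp : ∀ i, 1 ≤ p i)
    (hF : LocPFlowFeasible Ext ExtF Adj sl u μ z lam)
    (hS : LocPF2Split Ext ExtF Adj sl u μ z lam ρ Φ Ψ Υ Θ) :
    ∃ dv, LocPF2Feasible Ext ExtF Adj p x sl u μ dv z lam ρ Φ Ψ Υ Θ := by
  refine ⟨fun l i => if i = sl l then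
      (∑ j ∈ outN Adj (sl l),
        lpnorm (p (sl l)) ((∑ e ∈ ExtF (sl l) j, lam l (sl l) j e • e) - z l (sl l) j • x l))
      + lpnorm (p (sl l)) ((∑ e ∈ Ext (sl l), μ (sl l) e • e) - u (sl l) • x l)
    else
      (∑ h ∈ inN Adj i, ∑ j ∈ outN Adj i,
        lpnorm (p i) ((∑ e ∈ ExtF i j, Ψ l h i j e • e) - (∑ e ∈ ExtF h i, Φ l h i j e • e)))
      + (∑ h ∈ inN Adj i,
        lpnorm (p i) ((∑ e ∈ Ext i, Θ l h i e • e) - (∑ e ∈ ExtF h i, Υ l h i e • e))),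
    { toLocPFlowFeasible := hF, toLocPF2Split := hS, dv_nonneg := ?_,
      dist_source := fun l => by simp, dist_transit := fun l i hi => by simp [hi] }⟩
  intro l i
  split_ifs
  · exact add_nonneg (Finset.sum_nonneg fun _ _ => lpnorm_nonneg (hp _) _) (lpnorm_nonneg (hp _) _)
  · exact add_nonneg (Finset.sum_nonneg fun _ _ => Finset.sum_nonneg fun _ _ =>
      lpnorm_nonneg (hp _) _) (Finset.sum_nonneg fun _ _ => lpnorm_nonneg (hp _) _)

end LocP

theorem stmt_15_general {d m n : ℕ}
    (Ext : Fin m → Finset (Fin d → ℝ))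
    (p : Fin m → ℝ≥0∞) (hp : ∀ i, 1 ≤ p i)
    (ω : Fin m → ℝ) (hω : ∀ i, 0 < ω i)
    (ExtF : Fin m → Fin m → Finset (Fin d → ℝ))
    (Adj : Fin m → Fin m → Prop)
    (x : Fin n → (Fin d → ℝ)) (w : Fin n → ℝ) (hw : ∀ l, 0 < w l)
    (sl : Fin n → Fin m) :
    sInf {r : ℝ | ∃ (u : Fin m → ℝ) (μ : Fin m → (Fin d → ℝ) → ℝ)
        (dv : Fin n → Fin m → ℝ) (z : Fin n → Fin m → Fin m → ℝ)
        (lam : Fin n → Fin m → Fin m → (Fin d → ℝ) → ℝ),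
        (∀ i, 0 ≤ u i ∧ u i ≤ 1) ∧
        (∀ i, ∀ e ∈ Ext i, 0 ≤ μ i e) ∧
        (∀ l i, 0 ≤ dv l i) ∧
        (∀ l i j, Adj i j → 0 ≤ z l i j ∧ z l i j ≤ 1) ∧
        (∀ l i j, Adj i j → ∀ e ∈ ExtF i j, 0 ≤ lam l i j e) ∧
        ((∑ i, u i) = 1) ∧
        (∀ i, (∑ e ∈ Ext i, μ i e) = u i) ∧
        (∀ l, (∑ j ∈ outN Adj (sl l), z l (sl l) j)
            - (∑ h ∈ inN Adj (sl l), z l h (sl l)) = 1 - u (sl l)) ∧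
        (∀ l i, i ≠ sl l →
          (∑ j ∈ outN Adj i, z l i j) - (∑ h ∈ inN Adj i, z l h i) = -(u i)) ∧
        (∀ l i, (∑ h ∈ inN Adj i, z l h i) ≤ 1 - u (sl l)) ∧
        (∀ l i, (∑ j ∈ outN Adj i, z l i j) ≤ 1 - u (sl l)) ∧
        (∀ l, lpnorm (p (sl l))
            ((∑ e ∈ Ext (sl l), μ (sl l) e • e)
              + (∑ j ∈ outN Adj (sl l), ∑ e ∈ ExtF (sl l) j, lam l (sl l) j e • e)
              - x l) ≤ dv l (sl l)) ∧
        (∀ l i, i ≠ sl l → lpnorm (p i)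
            ((∑ e ∈ Ext i, μ i e • e)
              + (∑ j ∈ outN Adj i, ∑ e ∈ ExtF i j, lam l i j e • e)
              - (∑ h ∈ inN Adj i, ∑ e ∈ ExtF h i, lam l h i e • e)) ≤ dv l i) ∧
        (∀ l i j, Adj i j → (∑ e ∈ ExtF i j, lam l i j e) = z l i j) ∧
        r = ∑ l, ∑ i, w l * ω i * dv l i}
    ≤ sInf {r : ℝ | ∃ (u : Fin m → ℝ) (μ : Fin m → (Fin d → ℝ) → ℝ)
        (dv : Fin n → Fin m → ℝ) (z : Fin n → Fin m → Fin m → ℝ)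
        (lam : Fin n → Fin m → Fin m → (Fin d → ℝ) → ℝ)
        (ρ : Fin n → Fin m → Fin m → Fin m → ℝ)
        (Φ : Fin n → Fin m → Fin m → Fin m → (Fin d → ℝ) → ℝ)
        (Ψ : Fin n → Fin m → Fin m → Fin m → (Fin d → ℝ) → ℝ)
        (Υ : Fin n → Fin m → Fin m → (Fin d → ℝ) → ℝ)
        (Θ : Fin n → Fin m → Fin m → (Fin d → ℝ) → ℝ),
        (∀ i, 0 ≤ u i ∧ u i ≤ 1) ∧
        (∀ i, ∀ e ∈ Ext i, 0 ≤ μ i e) ∧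
        (∀ l i, 0 ≤ dv l i) ∧
        (∀ l i j, Adj i j → 0 ≤ z l i j ∧ z l i j ≤ 1) ∧
        (∀ l i j, Adj i j → ∀ e ∈ ExtF i j, 0 ≤ lam l i j e) ∧
        (∀ l i, i ≠ sl l → ∀ h j, Adj h i → Adj i j → 0 ≤ ρ l h i j) ∧
        (∀ l i, i ≠ sl l → ∀ h j, Adj h i → Adj i j →
          ∀ e ∈ ExtF h i, 0 ≤ Φ l h i j e) ∧
        (∀ l i, i ≠ sl l → ∀ h j, Adj h i → Adj i j →
          ∀ e ∈ ExtF i j, 0 ≤ Ψ l h i j e) ∧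
        (∀ l i, i ≠ sl l → ∀ h, Adj h i → ∀ e ∈ ExtF h i, 0 ≤ Υ l h i e) ∧
        (∀ l i, i ≠ sl l → ∀ h, Adj h i → ∀ e ∈ Ext i, 0 ≤ Θ l h i e) ∧
        ((∑ i, u i) = 1) ∧
        (∀ i, (∑ e ∈ Ext i, μ i e) = u i) ∧
        (∀ l, (∑ j ∈ outN Adj (sl l), z l (sl l) j)
            - (∑ h ∈ inN Adj (sl l), z l h (sl l)) = 1 - u (sl l)) ∧
        (∀ l i, i ≠ sl l →
          (∑ j ∈ outN Adj i, z l i j) - (∑ h ∈ inN Adj i, z l h i) = -(u i)) ∧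
        (∀ l i, (∑ h ∈ inN Adj i, z l h i) ≤ 1 - u (sl l)) ∧
        (∀ l i, (∑ j ∈ outN Adj i, z l i j) ≤ 1 - u (sl l)) ∧
        (∀ l, (∑ j ∈ outN Adj (sl l),
              lpnorm (p (sl l)) ((∑ e ∈ ExtF (sl l) j, lam l (sl l) j e • e)
                - z l (sl l) j • x l))
            + lpnorm (p (sl l)) ((∑ e ∈ Ext (sl l), μ (sl l) e • e) - u (sl l) • x l)
            ≤ dv l (sl l)) ∧
        (∀ l i, i ≠ sl l →
          (∑ h ∈ inN Adj i, ∑ j ∈ outN Adj i,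
              lpnorm (p i) ((∑ e ∈ ExtF i j, Ψ l h i j e • e)
                - (∑ e ∈ ExtF h i, Φ l h i j e • e)))
            + (∑ h ∈ inN Adj i,
              lpnorm (p i) ((∑ e ∈ Ext i, Θ l h i e • e)
                - (∑ e ∈ ExtF h i, Υ l h i e • e)))
            ≤ dv l i) ∧
        (∀ l i j, Adj i j → (∑ e ∈ ExtF i j, lam l i j e) = z l i j) ∧
        (∀ l i, i ≠ sl l → ∀ h, Adj h i →
          (∑ j ∈ outN Adj i, ρ l h i j) + (∑ e ∈ Ext i, Θ l h i e) = z l h i) ∧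
        (∀ l i, i ≠ sl l → ∀ j, Adj i j →
          (∑ h ∈ inN Adj i, ρ l h i j) = z l i j) ∧
        (∀ l i, i ≠ sl l → ∀ h j, Adj h i → Adj i j →
          (∑ e ∈ ExtF h i, Φ l h i j e) = ρ l h i j) ∧
        (∀ l i, i ≠ sl l → ∀ h, Adj h i → ∀ e ∈ ExtF h i,
          (∑ j ∈ outN Adj i, Φ l h i j e) + Υ l h i e = lam l h i e) ∧
        (∀ l i, i ≠ sl l → ∀ h j, Adj h i → Adj i j →
          (∑ e ∈ ExtF i j, Ψ l h i j e) = ρ l h i j) ∧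
        (∀ l i, i ≠ sl l → ∀ j, Adj i j → ∀ e ∈ ExtF i j,
          (∑ h ∈ inN Adj i, Ψ l h i j e) = lam l i j e) ∧
        (∀ l i, i ≠ sl l →
          (∑ h ∈ inN Adj i, ∑ e ∈ ExtF h i, Υ l h i e) = u i) ∧
        (∀ l i, i ≠ sl l →
          (∑ h ∈ inN Adj i, ∑ e ∈ Ext i, Θ l h i e) = u i) ∧
        (∀ l i, i ≠ sl l → ∀ e ∈ Ext i,
          (∑ h ∈ inN Adj i, Θ l h i e) = μ i e) ∧
        r = ∑ l, ∑ i, w l * ω i * dv l i} := by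
  refine sInf_le_sInf_of_subset_of_nonneg ?_ ?_ ?_
  · rintro r ⟨u, μ, dv, z, lam, ρ, Φ, Ψ, Υ, Θ, c1, c2, c3, c4, c5, c6, c7, c8, c9, c10, c11, c12,
      c13, c14, c15, c16, c17, c18, c19, c20, c21, c22, c23, c24, c25, c26, c27, c28, rfl⟩
    have hF1 := LocPF2Feasible.toLocPF1Feasible hp (x := x)
      ⟨⟨c1, c2, c4, c5, c11, c12, c13, c14, c15, c16, c19⟩,
        ⟨c6, c7, c8, c9, c10, c20, c21, c22, c23, c24, c25, c26, c27, c28⟩, c3, c17, c18⟩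
    exact ⟨u, μ, dv, z, lam, c1, c2, c3, c4, c5, c11, c12, c13, c14, c15, c16,
      hF1.dist_source, hF1.dist_transit, c19, rfl⟩
  · rintro r ⟨u, μ, dv, z, lam, -, -, hdv, -, -, -, -, -, -, -, -, -, -, -, rfl⟩
    exact Finset.sum_nonneg fun l _ => Finset.sum_nonneg fun i _ =>
      mul_nonneg (mul_nonneg (hw l).le (hω i).le) (hdv l i)
  · rintro ⟨r, u, μ, dv, z, lam, c1, c2, -, c4, c5, c6, c7, c8, c9, c10, c11, -, -, c14, -⟩
    have hF : LocPFlowFeasible Ext ExtF Adj sl u μ z lam :=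
      ⟨c1, c2, c4, c5, c6, c7, c8, c9, c10, c11, c14⟩
    obtain ⟨dv, hF2⟩ := hF.locPF2Split_proportional.exists_locPF2Feasible (x := x) hp hF
    exact ⟨_, u, μ, dv, z, lam, _, _, _, _, _, c1, c2, hF2.dv_nonneg, c4, c5, hF2.ρ_nonneg,
      hF2.Φ_nonneg, hF2.Ψ_nonneg, hF2.Υ_nonneg, hF2.Θ_nonneg, c6, c7, c8, c9, c10, c11,
      hF2.dist_source, hF2.dist_transit, c14, hF2.sum_ρ_add_sum_Θ, hF2.sum_ρ, hF2.sum_Φ,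
      hF2.sum_Φ_add_Υ, hF2.sum_Ψ, hF2.sum_Ψ_eq_lam, hF2.sum_sum_Υ, hF2.sum_sum_Θ, hF2.sum_Θ, rfl⟩

/-- The optimal value of the continuous relaxation of formulation (LocP-F1) is at most
the optimal value of the continuous relaxation of formulation (LocP-F2). -/
theorem stmt_15 {d m n : ℕ}
    (P : Fin m → Set (Fin d → ℝ))
    (Ext : Fin m → Finset (Fin d → ℝ))
    (hExt : ∀ i, (Ext i : Set (Fin d → ℝ)) = Set.extremePoints ℝ (P i))
    (hP : ∀ i, P i = convexHull ℝ (Ext i : Set (Fin d → ℝ)))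
    (hdisj : ∀ i j, i ≠ j → interior (P i) ∩ interior (P j) = ∅)
    (p : Fin m → ℝ≥0∞) (hp : ∀ i, 1 ≤ p i)
    (ω : Fin m → ℝ) (hω : ∀ i, 0 < ω i)
    (ExtF : Fin m → Fin m → Finset (Fin d → ℝ))
    (hExtF : ∀ i j, i ≠ j → (ExtF i j : Set (Fin d → ℝ)) = Set.extremePoints ℝ (P i ∩ P j))
    (hFpoly : ∀ i j, i ≠ j → P i ∩ P j = convexHull ℝ (ExtF i j : Set (Fin d → ℝ)))
    (Adj : Fin m → Fin m → Prop)
    (hAdj : ∀ i j, Adj i j ↔ i ≠ j ∧ (P i ∩ P j).Nonempty)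
    (x : Fin n → (Fin d → ℝ)) (w : Fin n → ℝ) (hw : ∀ l, 0 < w l)
    (sl : Fin n → Fin m) (hsl : ∀ l, x l ∈ P (sl l)) :
    sInf {r : ℝ | ∃ (u : Fin m → ℝ) (μ : Fin m → (Fin d → ℝ) → ℝ)
        (dv : Fin n → Fin m → ℝ) (z : Fin n → Fin m → Fin m → ℝ)
        (lam : Fin n → Fin m → Fin m → (Fin d → ℝ) → ℝ),
        (∀ i, 0 ≤ u i ∧ u i ≤ 1) ∧
        (∀ i, ∀ e ∈ Ext i, 0 ≤ μ i e) ∧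
        (∀ l i, 0 ≤ dv l i) ∧
        (∀ l i j, Adj i j → 0 ≤ z l i j ∧ z l i j ≤ 1) ∧
        (∀ l i j, Adj i j → ∀ e ∈ ExtF i j, 0 ≤ lam l i j e) ∧
        ((∑ i, u i) = 1) ∧
        (∀ i, (∑ e ∈ Ext i, μ i e) = u i) ∧
        (∀ l, (∑ j ∈ outN Adj (sl l), z l (sl l) j)
            - (∑ h ∈ inN Adj (sl l), z l h (sl l)) = 1 - u (sl l)) ∧
        (∀ l i, i ≠ sl l →
          (∑ j ∈ outN Adj i, z l i j) - (∑ h ∈ inN Adj i, z l h i) = -(u i)) ∧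
        (∀ l i, (∑ h ∈ inN Adj i, z l h i) ≤ 1 - u (sl l)) ∧
        (∀ l i, (∑ j ∈ outN Adj i, z l i j) ≤ 1 - u (sl l)) ∧
        (∀ l, lpnorm (p (sl l))
            ((∑ e ∈ Ext (sl l), μ (sl l) e • e)
              + (∑ j ∈ outN Adj (sl l), ∑ e ∈ ExtF (sl l) j, lam l (sl l) j e • e)
              - x l) ≤ dv l (sl l)) ∧
        (∀ l i, i ≠ sl l → lpnorm (p i)
            ((∑ e ∈ Ext i, μ i e • e)
              + (∑ j ∈ outN Adj i, ∑ e ∈ ExtF i j, lam l i j e • e)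
              - (∑ h ∈ inN Adj i, ∑ e ∈ ExtF h i, lam l h i e • e)) ≤ dv l i) ∧
        (∀ l i j, Adj i j → (∑ e ∈ ExtF i j, lam l i j e) = z l i j) ∧
        r = ∑ l, ∑ i, w l * ω i * dv l i}
    ≤ sInf {r : ℝ | ∃ (u : Fin m → ℝ) (μ : Fin m → (Fin d → ℝ) → ℝ)
        (dv : Fin n → Fin m → ℝ) (z : Fin n → Fin m → Fin m → ℝ)
        (lam : Fin n → Fin m → Fin m → (Fin d → ℝ) → ℝ)
        (ρ : Fin n → Fin m → Fin m → Fin m → ℝ)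
        (Φ : Fin n → Fin m → Fin m → Fin m → (Fin d → ℝ) → ℝ)
        (Ψ : Fin n → Fin m → Fin m → Fin m → (Fin d → ℝ) → ℝ)
        (Υ : Fin n → Fin m → Fin m → (Fin d → ℝ) → ℝ)
        (Θ : Fin n → Fin m → Fin m → (Fin d → ℝ) → ℝ),
        (∀ i, 0 ≤ u i ∧ u i ≤ 1) ∧
        (∀ i, ∀ e ∈ Ext i, 0 ≤ μ i e) ∧
        (∀ l i, 0 ≤ dv l i) ∧
        (∀ l i j, Adj i j → 0 ≤ z l i j ∧ z l i j ≤ 1) ∧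
        (∀ l i j, Adj i j → ∀ e ∈ ExtF i j, 0 ≤ lam l i j e) ∧
        (∀ l i, i ≠ sl l → ∀ h j, Adj h i → Adj i j → 0 ≤ ρ l h i j) ∧
        (∀ l i, i ≠ sl l → ∀ h j, Adj h i → Adj i j →
          ∀ e ∈ ExtF h i, 0 ≤ Φ l h i j e) ∧
        (∀ l i, i ≠ sl l → ∀ h j, Adj h i → Adj i j →
          ∀ e ∈ ExtF i j, 0 ≤ Ψ l h i j e) ∧
        (∀ l i, i ≠ sl l → ∀ h, Adj h i → ∀ e ∈ ExtF h i, 0 ≤ Υ l h i e) ∧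
        (∀ l i, i ≠ sl l → ∀ h, Adj h i → ∀ e ∈ Ext i, 0 ≤ Θ l h i e) ∧
        ((∑ i, u i) = 1) ∧
        (∀ i, (∑ e ∈ Ext i, μ i e) = u i) ∧
        (∀ l, (∑ j ∈ outN Adj (sl l), z l (sl l) j)
            - (∑ h ∈ inN Adj (sl l), z l h (sl l)) = 1 - u (sl l)) ∧
        (∀ l i, i ≠ sl l →
          (∑ j ∈ outN Adj i, z l i j) - (∑ h ∈ inN Adj i, z l h i) = -(u i)) ∧
        (∀ l i, (∑ h ∈ inN Adj i, z l h i) ≤ 1 - u (sl l)) ∧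
        (∀ l i, (∑ j ∈ outN Adj i, z l i j) ≤ 1 - u (sl l)) ∧
        (∀ l, (∑ j ∈ outN Adj (sl l),
              lpnorm (p (sl l)) ((∑ e ∈ ExtF (sl l) j, lam l (sl l) j e • e)
                - z l (sl l) j • x l))
            + lpnorm (p (sl l)) ((∑ e ∈ Ext (sl l), μ (sl l) e • e) - u (sl l) • x l)
            ≤ dv l (sl l)) ∧
        (∀ l i, i ≠ sl l →
          (∑ h ∈ inN Adj i, ∑ j ∈ outN Adj i,
              lpnorm (p i) ((∑ e ∈ ExtF i j, Ψ l h i j e • e)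
                - (∑ e ∈ ExtF h i, Φ l h i j e • e)))
            + (∑ h ∈ inN Adj i,
              lpnorm (p i) ((∑ e ∈ Ext i, Θ l h i e • e)
                - (∑ e ∈ ExtF h i, Υ l h i e • e)))
            ≤ dv l i) ∧
        (∀ l i j, Adj i j → (∑ e ∈ ExtF i j, lam l i j e) = z l i j) ∧
        (∀ l i, i ≠ sl l → ∀ h, Adj h i →
          (∑ j ∈ outN Adj i, ρ l h i j) + (∑ e ∈ Ext i, Θ l h i e) = z l h i) ∧
        (∀ l i, i ≠ sl l → ∀ j, Adj i j →
          (∑ h ∈ inN Adj i, ρ l h i j) = z l i j) ∧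
        (∀ l i, i ≠ sl l → ∀ h j, Adj h i → Adj i j →
          (∑ e ∈ ExtF h i, Φ l h i j e) = ρ l h i j) ∧
        (∀ l i, i ≠ sl l → ∀ h, Adj h i → ∀ e ∈ ExtF h i,
          (∑ j ∈ outN Adj i, Φ l h i j e) + Υ l h i e = lam l h i e) ∧
        (∀ l i, i ≠ sl l → ∀ h j, Adj h i → Adj i j →
          (∑ e ∈ ExtF i j, Ψ l h i j e) = ρ l h i j) ∧
        (∀ l i, i ≠ sl l → ∀ j, Adj i j → ∀ e ∈ ExtF i j,
          (∑ h ∈ inN Adj i, Ψ l h i j e) = lam l i j e) ∧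
        (∀ l i, i ≠ sl l →
          (∑ h ∈ inN Adj i, ∑ e ∈ ExtF h i, Υ l h i e) = u i) ∧
        (∀ l i, i ≠ sl l →
          (∑ h ∈ inN Adj i, ∑ e ∈ Ext i, Θ l h i e) = u i) ∧
        (∀ l i, i ≠ sl l → ∀ e ∈ Ext i,
          (∑ h ∈ inN Adj i, Θ l h i e) = μ i e) ∧
        r = ∑ l, ∑ i, w l * ω i * dv l i} :=
  stmt_15_general Ext p hp ω hω ExtF Adj x w hw sl
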